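/- arXiv:1012.5347 — 7 statements merged into one kernel-verified Lean document; each statement's English description precedes it below -/
import Mathlib

section
/- The symmetry group of the d-dimensional Sierpinski gasket (the group of isometries of ℝ^d mapping the gasket onto itself) is isomorphic to the symmetric group S_{d+1}, via the action on the d+1 vertices of the defining regular simplex. -/
/-!
The attractor of the IFS lies in every nonempty closed set that the maps `F p i` send into
itself, in particular in the simplex `convexHull ℝ (range p)`, and it contains the vertices.
Since the Euclidean norm is strictly convex, two points of the simplex at distance `1`, its
diameter, are vertices; a symmetry keeps distances, so it permutes the vertices. Equidistant
points are affinely independent (for `∑ wᵢ = 0`, `∑ wᵢ wⱼ ‖pᵢ - pⱼ‖² = -2 ‖∑ wᵢ pᵢ‖²`), so the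
vertices span `ℝ^d` and the only symmetry fixing all of them is the identity. Conversely, the
reflection in the perpendicular bisector of `pᵢ pⱼ` swaps `pᵢ` and `pⱼ` and fixes the other
vertices, so it conjugates the IFS to itself and, by uniqueness of the attractor, preserves `K`;
these transpositions generate the symmetric group.
-/

open MeasureTheory Set Filter
noncomputable section

abbrev E (d : ℕ) := EuclideanSpace ℝ (Fin d)

variable {d : ℕ}

/-- The maps of the Sierpinski gasket IFS: `F p i x = (p i + x)/2`. -/
def F (p : Fin (d+1) → E d) (i : Fin (d+1)) (x : E d) : E d := midpoint ℝ (p i) x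

/-- `F_x = F_{i₁} ∘ ⋯ ∘ F_{iₙ}` for a word `x = i₁…iₙ`. -/
def Fword (p : Fin (d+1) → E d) (w : List (Fin (d+1))) : E d → E d :=
  w.foldr (fun i f => F p i ∘ f) id

/-- The cell `K_x = F_x(K)`. -/
def Kcell (p : Fin (d+1) → E d) (K : Set (E d)) (w : List (Fin (d+1))) : Set (E d) :=
  Fword p w '' K

/-- Edges of the augmented rooted tree (Sierpinski graph): vertical edges to the
parent (drop the last letter) and horizontal edges between distinct equal-length
words whose cells intersect. -/
def Edge (p : Fin (d+1) → E d) (K : Set (E d)) (x y : List (Fin (d+1))) : Prop :=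
  (x ≠ [] ∧ y = x.dropLast) ∨ (y ≠ [] ∧ x = y.dropLast) ∨
    (x ≠ y ∧ x.length = y.length ∧ (Kcell p K x ∩ Kcell p K y).Nonempty)

/-- The symmetry group of `K`: isometries of `ℝ^d` mapping `K` onto itself. -/
def symGroup (K : Set (E d)) : Subgroup (E d ≃ᵢ E d) where
  carrier := {g | g '' K = K}
  one_mem' := by simp
  mul_mem' := by
    intro a b ha hb
    simp only [Set.mem_setOf_eq] at *
    have h : ⇑(a * b) = ⇑a ∘ ⇑b := rfl
    rw [h, Set.image_comp, hb, ha]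
  inv_mem' := by
    intro a ha
    simp only [Set.mem_setOf_eq] at *
    conv_lhs => rw [← ha]
    rw [← Set.image_comp]
    simp

theorem Metric.infDist_apply_le_mul_of_mapsTo {X : Type*} [PseudoMetricSpace X] {f : X → X}
    {c : NNReal} (hf : LipschitzWith c f) {B : Set X} (hB : MapsTo f B B) (hBne : B.Nonempty)
    (x : X) : Metric.infDist (f x) B ≤ c * Metric.infDist x B := by
  have := hBne.to_subtype
  rw [Metric.infDist_eq_iInf (x := x), Real.mul_iInf_of_nonneg c.coe_nonneg]
  exact le_ciInf fun y => (Metric.infDist_le_dist_of_mem (hB y.2)).trans (hf.dist_le_mul x y)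

theorem subset_of_subset_iUnion_image_of_mapsTo {X ι : Type*} [PseudoMetricSpace X]
    {f : ι → X → X} {c : NNReal} (hc : c < 1) (hf : ∀ i, LipschitzWith c (f i))
    {A B : Set X} (hA : IsCompact A) (hAf : A ⊆ ⋃ i, f i '' A)
    (hB : IsClosed B) (hBne : B.Nonempty) (hBf : ∀ i, MapsTo (f i) B B) : A ⊆ B := by
  rcases A.eq_empty_or_nonempty with rfl | hAne
  · exact empty_subset B
  obtain ⟨x₀, hx₀, hmax⟩ :=
    hA.exists_isMaxOn hAne (Metric.continuous_infDist_pt B).continuousOn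
  have hcontract : ∀ x ∈ A, Metric.infDist x B ≤ c * Metric.infDist x₀ B := by
    intro x hx
    obtain ⟨i, x', hx', rfl⟩ := mem_iUnion.1 (hAf hx)
    exact (Metric.infDist_apply_le_mul_of_mapsTo (hf i) (hBf i) hBne x').trans
      (mul_le_mul_of_nonneg_left (hmax hx') c.2)
  have hc' : (c : ℝ) < 1 := hc
  have hzero : Metric.infDist x₀ B = 0 := by
    nlinarith [hcontract x₀ hx₀, Metric.infDist_nonneg (x := x₀) (s := B)]
  intro x hx
  rw [hB.mem_iff_infDist_zero hBne]
  exact le_antisymm (by simpa [hzero] using hcontract x hx) Metric.infDist_nonneg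

theorem mem_of_mem_convexHull_of_dist_eq {V : Type*} [NormedAddCommGroup V] [NormedSpace ℝ V]
    [StrictConvexSpace ℝ V] {s : Set V} {r : ℝ} (hs : ∀ a ∈ s, ∀ b ∈ s, dist a b ≤ r)
    {x y : V} (hx : x ∈ convexHull ℝ s) (hy : y ∈ convexHull ℝ s) (hxy : dist x y = r) :
    x ∈ s := by
  have hball : convexHull ℝ s ⊆ Metric.closedBall y r := fun u hu => by
    obtain ⟨a, ha, b, hb, hab⟩ := convexHull_exists_dist_ge2 hu hy
    exact hab.trans (hs a ha b hb)
  refine extremePoints_convexHull_subset (mem_extremePoints.2 ⟨hx, fun u hu v hv hxuv => ?_⟩)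
  by_cases huv : u = v
  · subst huv
    rw [openSegment_same, mem_singleton_iff] at hxuv
    exact ⟨hxuv.symm, hxuv.symm⟩
  · have := openSegment_subset_ball_of_ne (hball hu) (hball hv) huv hxuv
    exact absurd hxy (Metric.mem_ball.1 this).ne

theorem sum_sum_mul_mul_norm_sub_sq {ι V : Type*} [Fintype ι] [NormedAddCommGroup V]
    [InnerProductSpace ℝ V] {w : ι → ℝ} (hw : ∑ i, w i = 0) (x : ι → V) :
    ∑ i, ∑ j, w i * w j * ‖x i - x j‖ ^ 2 = -2 * ‖∑ i, w i • x i‖ ^ 2 := by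
  have hnorm : ‖∑ i, w i • x i‖ ^ 2 = ∑ i, ∑ j, w i * w j * inner ℝ (x i) (x j) := by
    rw [← real_inner_self_eq_norm_sq, sum_inner]
    simp_rw [inner_sum, real_inner_smul_left, real_inner_smul_right, mul_assoc]
  have hleft : ∑ i, ∑ j, w i * w j * ‖x i‖ ^ 2 = 0 := by
    simp_rw [mul_right_comm (w _) (w _), ← Finset.mul_sum, hw, mul_zero, Finset.sum_const_zero]
  have hright : ∑ i, ∑ j, w i * w j * ‖x j‖ ^ 2 = 0 := by
    simp_rw [mul_assoc, ← Finset.mul_sum, ← Finset.sum_mul, hw, zero_mul]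
  rw [hnorm]
  simp_rw [norm_sub_sq_real, mul_add, mul_sub, Finset.sum_add_distrib, Finset.sum_sub_distrib,
    hleft, hright]
  simp_rw [← mul_assoc (w _ * w _), mul_comm _ (2 : ℝ), mul_assoc (2 : ℝ), ← Finset.mul_sum]
  ring

theorem affineIndependent_of_dist_eq {ι V : Type*} [Fintype ι] [NormedAddCommGroup V]
    [InnerProductSpace ℝ V] {p : ι → V} {r : ℝ} (hr : r ≠ 0)
    (hp : ∀ i j, i ≠ j → dist (p i) (p j) = r) : AffineIndependent ℝ p := by
  classical
  rw [affineIndependent_iff_of_fintype]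
  intro w hw hwp
  have hcomb : ∑ i, w i • p i = 0 := by
    rw [Finset.weightedVSub_eq_weightedVSubOfPoint_of_sum_eq_zero _ _ _ hw 0,
      Finset.weightedVSubOfPoint_apply] at hwp
    simpa using hwp
  have hdist : ∀ i j, ‖p i - p j‖ ^ 2 = r ^ 2 - if i = j then r ^ 2 else 0 := by
    intro i j
    split_ifs with h
    · simp [h]
    · rw [← dist_eq_norm, hp i j h, sub_zero]
  have hsq : (∑ i, w i * w i) * r ^ 2 = 0 := by
    have := sum_sum_mul_mul_norm_sub_sq hw p
    simp_rw [hdist, hcomb, mul_sub, Finset.sum_sub_distrib, mul_ite, mul_zero,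
      Finset.sum_ite_eq, Finset.mem_univ, if_true, ← Finset.sum_mul, ← Finset.mul_sum, hw] at this
    simpa using this
  have hw2 := (mul_eq_zero.1 hsq).resolve_right (pow_ne_zero 2 hr)
  intro i
  exact mul_self_eq_zero.1 <|
    (Finset.sum_eq_zero_iff_of_nonneg fun i _ => mul_self_nonneg (w i)).1 hw2 i (Finset.mem_univ i)

open EuclideanGeometry AffineSubspace in
theorem exists_isometryEquiv_swap {V P : Type*} [NormedAddCommGroup V] [InnerProductSpace ℝ V]
    [FiniteDimensional ℝ V] [MetricSpace P] [NormedAddTorsor V P] (a b : P) :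
    ∃ g : P ≃ᵢ P, g a = b ∧ g b = a ∧ ∀ c, dist c a = dist c b → g c = c := by
  have : Nonempty (perpBisector a b) := ⟨⟨midpoint ℝ a b, midpoint_mem_perpBisector a b⟩⟩
  have hab : reflection (perpBisector a b) a = b := by
    have hv : a -ᵥ midpoint ℝ a b ∈ (perpBisector a b).directionᗮ := by
      rw [direction_perpBisector]
      refine Submodule.le_orthogonal_orthogonal _ (Submodule.mem_span_singleton.2 ⟨-⅟2, ?_⟩)
      rw [left_vsub_midpoint, neg_smul, ← smul_neg, neg_vsub_eq_vsub_rev]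
    have := reflection_orthogonal_vadd (midpoint_mem_perpBisector a b) hv
    rwa [vsub_vadd, neg_vsub_eq_vsub_rev, midpoint_vsub_left, ← right_vsub_midpoint,
      vsub_vadd] at this
  refine ⟨(reflection (perpBisector a b)).toIsometryEquiv, hab, ?_, fun c hc => ?_⟩
  · have := reflection_reflection (perpBisector a b) a
    rwa [hab] at this
  · exact (reflection_eq_self_iff c).2 (mem_perpBisector_iff_dist_eq.2 hc)

theorem IsometryEquiv.eq_refl_of_affineSpan_eq_top {V P : Type*} [NormedAddCommGroup V]
    [NormedSpace ℝ V] [MetricSpace P] [NormedAddTorsor V P] {s : Set P}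
    (hs : affineSpan ℝ s = ⊤) {g : P ≃ᵢ P} (hg : ∀ x ∈ s, g x = x) : g = IsometryEquiv.refl P := by
  ext x
  have := AffineMap.eqOn_affineSpan (f := g.toRealAffineIsometryEquiv.toAffineEquiv.toAffineMap)
    (g := AffineMap.id ℝ P) hg
  rw [hs] at this
  exact this (AffineSubspace.mem_top ℝ V x)

theorem Subgroup.exists_monoidHom_perm_of_apply_mem_range {X ι : Type*} [PseudoEMetricSpace X]
    [Finite ι] (G : Subgroup (X ≃ᵢ X)) {p : ι → X} (hp : Function.Injective p)
    (hG : ∀ g ∈ G, ∀ i, g (p i) ∈ range p) :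
    ∃ φ : G →* Equiv.Perm ι, ∀ (g : G) i, (g : X ≃ᵢ X) (p i) = p (φ g i) := by
  choose f hf using fun (g : G) i => hG g g.2 i
  have hinj : ∀ g, Function.Injective (f g) := fun g i j hij =>
    hp <| (g : X ≃ᵢ X).injective <| by rw [← hf, ← hf, hij]
  refine ⟨MonoidHom.mk' (fun g => Equiv.ofBijective (f g)
    (Finite.injective_iff_bijective.1 (hinj g))) fun g h => ?_, fun g i => (hf g i).symm⟩
  ext i
  apply hp
  simp only [Equiv.ofBijective_apply, Equiv.Perm.coe_mul, Function.comp_apply, hf]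
  rfl

theorem lipschitzWith_F (p : Fin (d+1) → E d) (i : Fin (d+1)) : LipschitzWith 2⁻¹ (F p i) :=
  LipschitzWith.of_dist_le_mul fun x y => by
    simpa [F, div_eq_inv_mul] using dist_midpoint_midpoint_le' (𝕜 := ℝ) (p i) x (p i) y

section Gasket

variable {p : Fin (d+1) → E d} {K : Set (E d)}

theorem mapsTo_F (hKself : K = ⋃ i, F p i '' K) (i : Fin (d+1)) : MapsTo (F p i) K K :=
  fun x hx => by
    rw [hKself]
    exact mem_iUnion.2 ⟨i, mem_image_of_mem _ hx⟩

theorem subset_of_selfSimilar_of_mapsTo {A B : Set (E d)} (hA : IsCompact A)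
    (hAself : A ⊆ ⋃ i, F p i '' A) (hB : IsClosed B) (hBne : B.Nonempty)
    (hBF : ∀ i, MapsTo (F p i) B B) : A ⊆ B :=
  subset_of_subset_iUnion_image_of_mapsTo (by norm_num) (lipschitzWith_F p) hA hAself hB hBne hBF

theorem vertex_mem (hKc : IsCompact K) (hKne : K.Nonempty) (hKself : K = ⋃ i, F p i '' K)
    (i : Fin (d+1)) : p i ∈ K := by
  refine singleton_subset_iff.1 <| subset_of_selfSimilar_of_mapsTo isCompact_singleton ?_
    hKc.isClosed hKne (mapsTo_F hKself)
  rw [singleton_subset_iff]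
  exact mem_iUnion.2 ⟨i, p i, rfl, midpoint_self ℝ (p i)⟩

theorem subset_convexHull_vertices (hKc : IsCompact K) (hKself : K = ⋃ i, F p i '' K) :
    K ⊆ convexHull ℝ (range p) :=
  subset_of_selfSimilar_of_mapsTo hKc hKself.le
    ((finite_range p).isCompact_convexHull ℝ).isClosed ⟨p 0, subset_convexHull ℝ _ ⟨0, rfl⟩⟩
    fun i _ hy => (convex_convexHull ℝ _).segment_subset
      (subset_convexHull ℝ (range p) ⟨i, rfl⟩) hy (midpoint_mem_segment (𝕜 := ℝ) (p i) _)

theorem image_eq_of_apply_vertex (hKc : IsCompact K) (hKne : K.Nonempty)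
    (hKself : K = ⋃ i, F p i '' K) {g : E d ≃ᵢ E d} {σ : Equiv.Perm (Fin (d+1))}
    (hg : ∀ i, g (p i) = p (σ i)) : g '' K = K := by
  have hcomm : ∀ i x, g (F p i x) = F p (σ i) (g x) := fun i x => by
    rw [F, F, g.map_midpoint, hg]
  have hgself : g '' K ⊆ ⋃ j, F p j '' (g '' K) := by
    rintro _ ⟨x, hx, rfl⟩
    rw [hKself] at hx
    obtain ⟨i, y, hy, rfl⟩ := mem_iUnion.1 hx
    exact mem_iUnion.2 ⟨σ i, g y, mem_image_of_mem g hy, (hcomm i y).symm⟩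
  have hgF : ∀ j, MapsTo (F p j) (g '' K) (g '' K) := by
    rintro j _ ⟨x, hx, rfl⟩
    refine ⟨F p (σ.symm j) x, mapsTo_F hKself _ hx, ?_⟩
    rw [hcomm, Equiv.apply_symm_apply]
  have hgKc : IsCompact (g '' K) := hKc.image g.continuous
  exact (subset_of_selfSimilar_of_mapsTo hgKc hgself hKc.isClosed hKne (mapsTo_F hKself)).antisymm
    (subset_of_selfSimilar_of_mapsTo hKc hKself.le hgKc.isClosed (hKne.image g) hgF)

theorem apply_vertex_mem_range (hp : ∀ i j, i ≠ j → dist (p i) (p j) = 1) (hd : 1 ≤ d)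
    (hKc : IsCompact K) (hKne : K.Nonempty) (hKself : K = ⋃ i, F p i '' K) {g : E d ≃ᵢ E d}
    (hg : g ∈ symGroup K) (i : Fin (d+1)) :
    g (p i) ∈ range p := by
  have : Nontrivial (Fin (d+1)) := Fin.nontrivial_iff_two_le.2 (by omega)
  obtain ⟨j, hji⟩ := exists_ne i
  have hmem : ∀ k, g (p k) ∈ convexHull ℝ (range p) := fun k =>
    subset_convexHull_vertices hKc hKself <| (hg : g '' K = K) ▸ mem_image_of_mem g
      (vertex_mem hKc hKne hKself k)
  refine mem_of_mem_convexHull_of_dist_eq ?_ (hmem i) (hmem j)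
    (by rw [g.dist_eq, hp i j hji.symm])
  rintro _ ⟨a, rfl⟩ _ ⟨b, rfl⟩
  rcases eq_or_ne a b with rfl | hab
  · simp
  · exact (hp a b hab).le

theorem affineSpan_range_eq_top (hp : ∀ i j, i ≠ j → dist (p i) (p j) = 1) :
    affineSpan ℝ (range p) = ⊤ :=
  (affineIndependent_of_dist_eq one_ne_zero hp).affineSpan_eq_top_iff_card_eq_finrank_add_one.2
    (by simp)

theorem exists_isometryEquiv_apply_vertex_swap (hp : ∀ i j, i ≠ j → dist (p i) (p j) = 1)
    (i j : Fin (d+1)) :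
    ∃ g : E d ≃ᵢ E d, ∀ k, g (p k) = p (Equiv.swap i j k) := by
  obtain ⟨g, hgi, hgj, hfix⟩ := exists_isometryEquiv_swap (p i) (p j)
  refine ⟨g, fun k => ?_⟩
  rcases eq_or_ne k i with rfl | hki
  · rw [Equiv.swap_apply_left, hgi]
  rcases eq_or_ne k j with rfl | hkj
  · rw [Equiv.swap_apply_right, hgj]
  rw [Equiv.swap_apply_of_ne_of_ne hki hkj, hfix _ (by rw [hp k i hki, hp k j hkj])]

end Gasket

/-- The symmetry group of the d-dimensional Sierpinski gasket is isomorphic to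
the symmetric group on d+1 symbols, via the action on the simplex vertices. -/
theorem stmt0 (hd : 1 ≤ d) (p : Fin (d+1) → E d)
    (hp : ∀ i j, i ≠ j → dist (p i) (p j) = 1)
    (K : Set (E d)) (hKc : IsCompact K) (hKne : K.Nonempty)
    (hKself : K = ⋃ i, F p i '' K) :
    ∃ φ : symGroup K →* Equiv.Perm (Fin (d+1)),
      Function.Bijective φ ∧
      ∀ g : symGroup K, ∀ i, (g : E d ≃ᵢ E d) (p i) = p (φ g i) := by
  have hpinj : Function.Injective p := fun i j hij => by
    by_contra hne
    simpa [hij] using hp i j hne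
  obtain ⟨φ, hφ⟩ := (symGroup K).exists_monoidHom_perm_of_apply_mem_range hpinj
    fun g hg => apply_vertex_mem_range hp hd hKc hKne hKself hg
  refine ⟨φ, ⟨?_, ?_⟩, hφ⟩
  · refine (injective_iff_map_eq_one φ).2 fun g hg => Subtype.ext <|
      IsometryEquiv.eq_refl_of_affineSpan_eq_top (affineSpan_range_eq_top hp) ?_
    rintro _ ⟨i, rfl⟩
    rw [hφ, hg, Equiv.Perm.one_apply]
  · rw [← MonoidHom.range_eq_top, eq_top_iff, ← Equiv.Perm.closure_isSwap, Subgroup.closure_le]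
    rintro _ ⟨i, j, -, rfl⟩
    obtain ⟨g, hg⟩ := exists_isometryEquiv_apply_vertex_swap hp i j
    exact ⟨⟨g, image_eq_of_apply_vertex hKc hKne hKself hg⟩,
      Equiv.ext fun k => hpinj ((hφ _ k).symm.trans (hg k))⟩
end
end

section
/- In the Sierpinski graph (X,E) for the d-dimensional Sierpinski gasket, two distinct words x, y of the same length n ≥ 1 are joined by a horizontal edge (equivalently, F_x(K) ∩ F_y(K) ≠ ∅) if and only if x = u i j^{m-1} and y = u j i^{m-1} for some word u, distinct symbols i ≠ j, and m ≥ 1 with |u| + m = n. -/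
open MeasureTheory Set Filter
noncomputable section

variable {d : ℕ}

section Aux
open RealInnerProductSpace

def ctr (p : Fin (d+1) → E d) : E d := ((d:ℝ)+1)⁻¹ • ∑ k, p k

lemma gram (p : Fin (d+1) → E d) (hp : ∀ i j, i ≠ j → dist (p i) (p j) = 1)
    (i j : Fin (d+1)) :
    ⟪p i - ctr p, p j - ctr p⟫
      = (if i = j then 1/2 else 0) - (2*((d:ℝ)+1))⁻¹ := by
  set N : ℝ := (d:ℝ)+1 with hNdef
  have hN : N ≠ 0 := by positivity
  have hG : ∀ i j : Fin (d+1), ⟪p i, p j⟫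
      = (‖p i‖^2 + ‖p j‖^2 - 1)/2 + (if i = j then 1/2 else 0) := by
    intro i j
    by_cases h : i = j
    · subst h; rw [real_inner_self_eq_norm_sq]; simp; ring
    · have h1 : ‖p i - p j‖ = 1 := by rw [← dist_eq_norm]; exact hp i j h
      have h2 : ‖p i - p j‖^2 = ‖p i‖^2 - 2*⟪p i, p j⟫ + ‖p j‖^2 := norm_sub_sq_real _ _
      rw [h1] at h2
      simp only [h, if_false]
      nlinarith
  have hs : ∀ i : Fin (d+1), ⟪p i, ∑ k, p k⟫
      = (N * ‖p i‖^2 + (∑ k, ‖p k‖^2) - N)/2 + 1/2 := by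
    intro i
    rw [inner_sum, Finset.sum_congr rfl (fun k _ => hG i k), Finset.sum_add_distrib,
      Finset.sum_ite_eq, ← Finset.sum_div, Finset.sum_sub_distrib, Finset.sum_add_distrib,
      Finset.sum_const, Finset.sum_const, Finset.card_univ, Fintype.card_fin]
    simp only [Finset.mem_univ, if_true]
    push_cast [nsmul_eq_mul]
    ring
  have hss : ⟪∑ k, p k, ∑ k, p k⟫
      = (N * (∑ k, ‖p k‖^2) + N * (∑ k, ‖p k‖^2) - N^2)/2 + N/2 := by
    rw [sum_inner, Finset.sum_congr rfl (fun k _ => hs k), Finset.sum_add_distrib,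
      Finset.sum_const, Finset.card_univ, Fintype.card_fin, ← Finset.sum_div,
      Finset.sum_sub_distrib, Finset.sum_add_distrib, Finset.sum_const,
      Finset.card_univ, Fintype.card_fin, ← Finset.mul_sum]
    push_cast [nsmul_eq_mul, Finset.sum_const, Finset.card_univ, Fintype.card_fin]
    ring
  have expand : ⟪p i - ctr p, p j - ctr p⟫
      = ⟪p i, p j⟫ - N⁻¹ * ⟪p i, ∑ k, p k⟫ - N⁻¹ * ⟪∑ k, p k, p j⟫
        + N⁻¹ * (N⁻¹ * ⟪∑ k, p k, ∑ k, p k⟫) := by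
    simp only [ctr, inner_sub_left, inner_sub_right, real_inner_smul_left,
      real_inner_smul_right, ← hNdef]
    ring
  rw [expand, hG i j, hs i, real_inner_comm (p j) (∑ k, p k), hs j, hss]
  by_cases h : i = j <;> simp only [h, if_true, if_false] <;> field_simp <;> ring

/-- Barycentric coordinate functions. -/
def bc (p : Fin (d+1) → E d) (i : Fin (d+1)) (x : E d) : ℝ :=
  ((d:ℝ)+1)⁻¹ + 2 * ⟪x - ctr p, p i - ctr p⟫

lemma bc_vertex (p : Fin (d+1) → E d) (hp : ∀ i j, i ≠ j → dist (p i) (p j) = 1)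
    (i j : Fin (d+1)) : bc p i (p j) = if i = j then 1 else 0 := by
  have := gram p hp j i
  rw [bc, this]
  have hN : ((d:ℝ)+1) ≠ 0 := by positivity
  by_cases h : i = j <;> simp [h, eq_comm] <;> field_simp <;> ring

lemma bc_affine (p : Fin (d+1) → E d) (i : Fin (d+1)) (x y : E d) (a a' : ℝ)
    (h : a + a' = 1) : bc p i (a • x + a' • y) = a * bc p i x + a' * bc p i y := by
  have hxy : a • x + a' • y - ctr p = a • (x - ctr p) + a' • (y - ctr p) := by
    have h1 : ctr p = (a + a') • ctr p := by rw [h, one_smul]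
    calc a • x + a' • y - ctr p = a • x + a' • y - (a+a') • ctr p := by rw [← h1]
      _ = a • (x - ctr p) + a' • (y - ctr p) := by
          rw [add_smul, smul_sub, smul_sub]; abel
  rw [bc, hxy, inner_add_left, real_inner_smul_left, real_inner_smul_left, bc, bc]
  have : a * ((d:ℝ)+1)⁻¹ + a' * ((d:ℝ)+1)⁻¹ = ((d:ℝ)+1)⁻¹ := by
    rw [← add_mul, h, one_mul]
  linarith [this]

lemma midpoint_eq (a b : E d) : midpoint ℝ a b = (2⁻¹:ℝ) • a + (2⁻¹:ℝ) • b := by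
  rw [midpoint_eq_smul_add, smul_add]; norm_num

lemma bc_F (p : Fin (d+1) → E d) (hp : ∀ i j, i ≠ j → dist (p i) (p j) = 1)
    (i j : Fin (d+1)) (x : E d) :
    bc p i (F p j x) = ((if i = j then 1 else 0) + bc p i x)/2 := by
  rw [F, midpoint_eq, bc_affine p i _ _ _ _ (by norm_num), bc_vertex p hp i j]
  ring

lemma bc_sum (p : Fin (d+1) → E d) (x : E d) : ∑ i, bc p i x = 1 := by
  have hN : ((d:ℝ)+1) ≠ 0 := by positivity
  have hzero : ∑ i, (p i - ctr p) = 0 := by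
    rw [Finset.sum_sub_distrib, Finset.sum_const, Finset.card_univ, Fintype.card_fin, ctr,
      ← Nat.cast_smul_eq_nsmul ℝ, smul_smul]
    push_cast
    rw [mul_inv_cancel₀ hN, one_smul, sub_self]
  simp only [bc]
  rw [Finset.sum_add_distrib, ← Finset.mul_sum, ← inner_sum, hzero, inner_zero_right,
    Finset.sum_const, Finset.card_univ, Fintype.card_fin, nsmul_eq_mul]
  push_cast
  rw [mul_inv_cancel₀ hN]
  ring

lemma bc_mem_Icc (p : Fin (d+1) → E d) (hp : ∀ i j, i ≠ j → dist (p i) (p j) = 1)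
    (i : Fin (d+1)) {x : E d} (hx : x ∈ convexHull ℝ (Set.range p)) :
    bc p i x ∈ Set.Icc (0:ℝ) 1 := by
  have hconv : Convex ℝ {x : E d | bc p i x ∈ Set.Icc (0:ℝ) 1} := by
    intro x hx y hy a a' ha ha' hab
    rw [Set.mem_setOf_eq, bc_affine p i x y a a' hab]
    obtain ⟨h1, h2⟩ := hx
    obtain ⟨h3, h4⟩ := hy
    constructor
    · nlinarith
    · nlinarith
  refine convexHull_min ?_ hconv hx
  rintro _ ⟨j, rfl⟩
  rw [Set.mem_setOf_eq, bc_vertex p hp i j]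
  by_cases h : i = j <;> simp [h]

lemma bc_repr (p : Fin (d+1) → E d) (hp : ∀ i j, i ≠ j → dist (p i) (p j) = 1)
    {x : E d} (hx : x ∈ convexHull ℝ (Set.range p)) :
    ∑ i, bc p i x • p i = x := by
  have hconv : Convex ℝ {x : E d | ∑ i, bc p i x • p i = x} := by
    intro x hx y hy a a' ha ha' hab
    rw [Set.mem_setOf_eq] at *
    have : ∀ i : Fin (d+1), bc p i (a • x + a' • y) • p i
        = a • (bc p i x • p i) + a' • (bc p i y • p i) := by
      intro i
      rw [bc_affine p i x y a a' hab, add_smul, smul_smul, smul_smul]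
    rw [Finset.sum_congr rfl (fun i _ => this i), Finset.sum_add_distrib,
      ← Finset.smul_sum, ← Finset.smul_sum, hx, hy]
  refine convexHull_min ?_ hconv hx
  rintro _ ⟨j, rfl⟩
  rw [Set.mem_setOf_eq]
  have : ∀ i : Fin (d+1), bc p i (p j) • p i = if i = j then p j else 0 := by
    intro i
    rw [bc_vertex p hp i j]
    by_cases h : i = j <;> simp [h]
  rw [Finset.sum_congr rfl (fun i _ => this i), Finset.sum_ite_eq' Finset.univ j]
  simp

lemma key_inter (p : Fin (d+1) → E d) (hp : ∀ i j, i ≠ j → dist (p i) (p j) = 1)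
    {i j : Fin (d+1)} (hij : i ≠ j) {u v : E d}
    (hu : u ∈ convexHull ℝ (Set.range p)) (hv : v ∈ convexHull ℝ (Set.range p))
    (h : F p i u = F p j v) : F p i u = midpoint ℝ (p i) (p j) := by
  set C := convexHull ℝ (Set.range p) with hC
  set z := F p i u with hz
  have hpiC : ∀ k, p k ∈ C := fun k => subset_convexHull ℝ _ ⟨k, rfl⟩
  have hzC : z ∈ C := by
    rw [hz, F, midpoint_eq]
    exact (convex_convexHull ℝ _) (hpiC i) hu (by norm_num) (by norm_num) (by norm_num)
  have hbi : 1/2 ≤ bc p i z := by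
    rw [hz, bc_F p hp i i u, if_pos rfl]
    have := (bc_mem_Icc p hp i hu).1
    linarith
  have hbj : 1/2 ≤ bc p j z := by
    rw [h, bc_F p hp j j v, if_pos rfl]
    have := (bc_mem_Icc p hp j hv).1
    linarith
  have hnn : ∀ k, 0 ≤ bc p k z := fun k => (bc_mem_Icc p hp k hzC).1
  have hle : ∀ k, bc p k z ≤ 1 := fun k => (bc_mem_Icc p hp k hzC).2
  have hsum : ∑ k, bc p k z = 1 := bc_sum p z
  have h1 := Finset.sum_sdiff (f := fun k => bc p k z) (Finset.subset_univ ({i,j} : Finset _))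
  rw [Finset.sum_pair hij, hsum] at h1
  have hrestnn : 0 ≤ ∑ k ∈ Finset.univ \ {i,j}, bc p k z :=
    Finset.sum_nonneg (fun k _ => hnn k)
  have hi2 : bc p i z = 1/2 := by linarith
  have hj2 : bc p j z = 1/2 := by linarith
  have hrest0 : ∑ k ∈ Finset.univ \ {i,j}, bc p k z = 0 := by linarith
  have hrest : ∀ k, k ≠ i → k ≠ j → bc p k z = 0 := by
    intro k hk1 hk2
    refine (Finset.sum_eq_zero_iff_of_nonneg (fun k _ => hnn k)).1 hrest0 k ?_
    simp [hk1, hk2]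
  have hterm : ∀ k, bc p k z • p k
      = (if k = i then (2⁻¹:ℝ) • p i else 0) + (if k = j then (2⁻¹:ℝ) • p j else 0) := by
    intro k
    by_cases hk1 : k = i
    · subst hk1
      rw [if_pos rfl, if_neg hij, hi2, add_zero]
      norm_num
    · by_cases hk2 : k = j
      · subst hk2
        rw [if_neg hk1, if_pos rfl, hj2, zero_add]
        norm_num
      · rw [if_neg hk1, if_neg hk2, hrest k hk1 hk2, zero_smul, add_zero]
  calc z = ∑ k, bc p k z • p k := (bc_repr p hp hzC).symm
    _ = ∑ k, ((if k = i then (2⁻¹:ℝ) • p i else 0) + (if k = j then (2⁻¹:ℝ) • p j else 0)) :=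
        Finset.sum_congr rfl (fun k _ => hterm k)
    _ = midpoint ℝ (p i) (p j) := by
        rw [Finset.sum_add_distrib, Finset.sum_ite_eq' Finset.univ i,
          Finset.sum_ite_eq' Finset.univ j, midpoint_eq]
        simp

lemma Fword_cons (p : Fin (d+1) → E d) (i : Fin (d+1)) (w : List (Fin (d+1))) :
    Fword p (i :: w) = F p i ∘ Fword p w := rfl

lemma Kcell_cons (p : Fin (d+1) → E d) (K : Set (E d)) (i : Fin (d+1)) (w : List (Fin (d+1))) :
    Kcell p K (i :: w) = F p i '' Kcell p K w := by
  rw [Kcell, Kcell, Fword_cons, Set.image_comp]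

lemma Fword_append (p : Fin (d+1) → E d) (u v : List (Fin (d+1))) :
    Fword p (u ++ v) = Fword p u ∘ Fword p v := by
  induction u with
  | nil => rfl
  | cons a u ih => rw [List.cons_append, Fword_cons, Fword_cons, ih]; rfl

lemma F_inj (p : Fin (d+1) → E d) (i : Fin (d+1)) : Function.Injective (F p i) := by
  intro x y h
  have := congrArg (fun z => (2:ℝ) • z - p i) h
  simpa [F, midpoint_eq_smul_add, smul_smul, smul_add] using this

lemma F_dist (p : Fin (d+1) → E d) (i : Fin (d+1)) (x y : E d) :
    dist (F p i x) (F p i y) = dist x y / 2 := by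
  have h : F p i x - F p i y = (2⁻¹:ℝ) • (x - y) := by
    rw [F, F, midpoint_eq, midpoint_eq, smul_sub]; abel
  rw [dist_eq_norm, dist_eq_norm, h, norm_smul]
  norm_num
  ring

lemma Fword_dist (p : Fin (d+1) → E d) (w : List (Fin (d+1))) (x y : E d) :
    dist (Fword p w x) (Fword p w y) = dist x y / 2 ^ w.length := by
  induction w with
  | nil => simp [Fword]
  | cons a w ih =>
      rw [Fword_cons, Function.comp_apply, Function.comp_apply, F_dist, ih, List.length_cons]
      rw [pow_succ]
      ring

lemma F_fix (p : Fin (d+1) → E d) (i : Fin (d+1)) : F p i (p i) = p i := midpoint_self _ _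

lemma Fword_rep_fix (p : Fin (d+1) → E d) (j : Fin (d+1)) (n : ℕ) :
    Fword p (List.replicate n j) (p j) = p j := by
  induction n with
  | zero => rfl
  | succ n ih => rw [List.replicate_succ, Fword_cons, Function.comp_apply, ih, F_fix]

lemma Fword_mem_C (p : Fin (d+1) → E d) (w : List (Fin (d+1))) {x : E d}
    (hx : x ∈ convexHull ℝ (Set.range p)) : Fword p w x ∈ convexHull ℝ (Set.range p) := by
  induction w with
  | nil => exact hx
  | cons a w ih =>
      rw [Fword_cons, Function.comp_apply, F, midpoint_eq]
      exact (convex_convexHull ℝ _) (subset_convexHull ℝ _ (Set.mem_range_self a)) ih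
        (by norm_num) (by norm_num) (by norm_num)

section KFacts
variable (p : Fin (d+1) → E d) (K : Set (E d))
  (hKc : IsCompact K) (hKne : K.Nonempty) (hKself : K = ⋃ i, F p i '' K)
include hKc hKne hKself

lemma FK_sub : ∀ i, F p i '' K ⊆ K := by
  intro i
  conv_rhs => rw [hKself]
  exact Set.subset_iUnion (fun i => F p i '' K) i

lemma Kcell_sub : ∀ w, Kcell p K w ⊆ K := by
  intro w
  induction w with
  | nil => rw [Kcell]; simp [Fword]
  | cons a w ih =>
      rw [Kcell_cons]
      exact (Set.image_mono ih).trans (FK_sub p K hKc hKne hKself a)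

lemma cover : ∀ n, ∀ x ∈ K, ∃ w : List (Fin (d+1)), w.length = n ∧ x ∈ Kcell p K w := by
  intro n
  induction n with
  | zero => intro x hx; exact ⟨[], rfl, by rw [Kcell]; simpa [Fword] using hx⟩
  | succ n ih =>
      intro x hx
      rw [hKself] at hx
      obtain ⟨_, ⟨i, rfl⟩, y, hy, rfl⟩ := hx
      obtain ⟨w, hwl, hyw⟩ := ih y hy
      exact ⟨i :: w, by simp [hwl], by rw [Kcell_cons]; exact ⟨y, hyw, rfl⟩⟩

lemma vertex_mem_K : ∀ j, p j ∈ K := by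
  intro j
  obtain ⟨x₀, hx₀⟩ := id hKne
  rw [← hKc.isClosed.closure_eq]
  rw [Metric.mem_closure_iff]
  intro ε hε
  obtain ⟨n, hn⟩ := exists_pow_lt_of_lt_one hε (by norm_num : (1:ℝ)/2 < 1)
  obtain ⟨m, hm⟩ := pow_unbounded_of_one_lt (dist (p j) x₀ / ε) (by norm_num : (1:ℝ) < 2)
  refine ⟨Fword p (List.replicate m j) x₀, ?_, ?_⟩
  · exact Kcell_sub p K hKc hKne hKself _ ⟨x₀, hx₀, rfl⟩
  · have h1 : dist (p j) (Fword p (List.replicate m j) x₀)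
        = dist (p j) x₀ / 2 ^ m := by
      conv_lhs => rw [← Fword_rep_fix p j m]
      rw [Fword_dist, List.length_replicate]
    rw [h1]
    rw [div_lt_iff₀ (by positivity)]
    rw [div_lt_iff₀ hε] at hm
    linarith [hm]

lemma K_sub_C : K ⊆ convexHull ℝ (Set.range p) := by
  intro x hx
  set C := convexHull ℝ (Set.range p) with hC
  have hCc : IsClosed C := ((Set.finite_range p).isCompact_convexHull ℝ).isClosed
  obtain ⟨R, hR⟩ := hKc.isBounded.subset_closedBall (p 0)
  rw [← hCc.closure_eq, Metric.mem_closure_iff]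
  intro ε hε
  obtain ⟨m, hm⟩ := pow_unbounded_of_one_lt ((R+1) / ε) (by norm_num : (1:ℝ) < 2)
  obtain ⟨w, hwl, hxw⟩ := cover p K hKc hKne hKself m x hx
  obtain ⟨y, hy, rfl⟩ := hxw
  refine ⟨Fword p w (p 0), Fword_mem_C p w (subset_convexHull ℝ _ (Set.mem_range_self 0)), ?_⟩
  rw [Fword_dist, hwl]
  have hyR : dist y (p 0) ≤ R := by
    have := hR hy
    rwa [Metric.mem_closedBall] at this
  have hR0 : 0 ≤ R := le_trans dist_nonneg hyR
  rw [div_lt_iff₀ (by positivity)]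
  rw [div_lt_iff₀ hε] at hm
  nlinarith [hm]

end KFacts

section Main
variable (p : Fin (d+1) → E d) (hp : ∀ i j, i ≠ j → dist (p i) (p j) = 1)
  (K : Set (E d)) (hKc : IsCompact K) (hKne : K.Nonempty) (hKself : K = ⋃ i, F p i '' K)
include hp hKc hKne hKself

lemma vertex_cell : ∀ (w : List (Fin (d+1))) (j : Fin (d+1)),
    p j ∈ Kcell p K w → w = List.replicate w.length j := by
  intro w
  induction w with
  | nil => intro j _; rfl
  | cons a w ih =>
      intro j h
      rw [Kcell_cons] at h
      obtain ⟨u, hu, hFu⟩ := h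
      have huC : u ∈ convexHull ℝ (Set.range p) :=
        K_sub_C p K hKc hKne hKself (Kcell_sub p K hKc hKne hKself w hu)
      have haj : a = j := by
        by_contra hne
        have h1 : bc p j (F p a u) = ((if j = a then 1 else 0) + bc p j u)/2 := bc_F p hp j a u
        rw [hFu, bc_vertex p hp j j, if_pos rfl, if_neg (Ne.symm hne)] at h1
        have h2 := (bc_mem_Icc p hp j huC).2
        linarith
      subst haj
      have hupj : u = p a := F_inj p a (by rw [hFu, F_fix])
      subst hupj
      rw [List.length_cons, List.replicate_succ, ← ih a hu]

lemma forward : ∀ x y : List (Fin (d+1)), x.length = y.length → x ≠ y →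
    (Kcell p K x ∩ Kcell p K y).Nonempty →
    ∃ (u : List (Fin (d+1))) (i j : Fin (d+1)) (m : ℕ), i ≠ j ∧ 1 ≤ m ∧
      x = u ++ i :: List.replicate (m-1) j ∧ y = u ++ j :: List.replicate (m-1) i := by
  intro x
  induction x with
  | nil =>
      intro y hl hne _
      exact absurd (List.length_eq_zero_iff.1 hl.symm).symm hne
  | cons a x' ih =>
      intro y hl hne hinter
      cases y with
      | nil => simp at hl
      | cons b y' =>
          obtain ⟨z, hzx, hzy⟩ := hinter
          rw [Kcell_cons] at hzx hzy
          obtain ⟨u, hu, hFu⟩ := hzx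
          obtain ⟨v, hv, hFv⟩ := hzy
          simp only [List.length_cons, Nat.add_right_cancel_iff] at hl
          by_cases hab : a = b
          · subst hab
            have huv : u = v := F_inj p a (by rw [hFu, hFv])
            subst huv
            have hne' : x' ≠ y' := fun h => hne (by rw [h])
            obtain ⟨u₀, i, j, m, hij, hm, hx, hy⟩ :=
              ih y' hl hne' ⟨u, hu, hv⟩
            exact ⟨a :: u₀, i, j, m, hij, hm, by rw [hx]; rfl, by rw [hy]; rfl⟩
          · have huC : u ∈ convexHull ℝ (Set.range p) :=
              K_sub_C p K hKc hKne hKself (Kcell_sub p K hKc hKne hKself x' hu)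
            have hvC : v ∈ convexHull ℝ (Set.range p) :=
              K_sub_C p K hKc hKne hKself (Kcell_sub p K hKc hKne hKself y' hv)
            have hmid : F p a u = midpoint ℝ (p a) (p b) :=
              key_inter p hp hab huC hvC (by rw [hFu, hFv])
            have hu' : u = p b := F_inj p a (by rw [hmid]; rfl)
            have hv' : v = p a := by
              refine F_inj p b ?_
              rw [show F p b v = midpoint ℝ (p a) (p b) by rw [hFv, ← hFu, hmid],
                midpoint_comm]
              rfl
            subst hu'
            subst hv'
            have hx' := vertex_cell p hp K hKc hKne hKself x' b hu
            have hy' := vertex_cell p hp K hKc hKne hKself y' a hv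
            refine ⟨[], a, b, x'.length + 1, hab, Nat.le_add_left 1 _, ?_, ?_⟩
            · rw [List.nil_append, Nat.add_sub_cancel]
              exact congrArg (a :: ·) hx'
            · rw [List.nil_append, Nat.add_sub_cancel, hl]
              exact congrArg (b :: ·) hy'

lemma backward (u : List (Fin (d+1))) (i j : Fin (d+1)) (m : ℕ) (hij : i ≠ j) (hm : 1 ≤ m) :
    (Kcell p K (u ++ i :: List.replicate (m-1) j) ∩
      Kcell p K (u ++ j :: List.replicate (m-1) i)).Nonempty := by
  refine ⟨Fword p u (midpoint ℝ (p i) (p j)), ?_, ?_⟩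
  · rw [Kcell, Fword_append]
    refine ⟨p j, vertex_mem_K p K hKc hKne hKself j, ?_⟩
    rw [Function.comp_apply, Fword_cons, Function.comp_apply, Fword_rep_fix]
    rfl
  · rw [Kcell, Fword_append]
    refine ⟨p i, vertex_mem_K p K hKc hKne hKself i, ?_⟩
    rw [Function.comp_apply, Fword_cons, Function.comp_apply, Fword_rep_fix]
    exact congrArg (Fword p u) (by rw [F, midpoint_comm])

end Main

end Aux

/-- Characterization of horizontal edges: distinct equal-length words have
intersecting cells iff `x = u i j^(m-1)` and `y = u j i^(m-1)` with i ≠ j, m ≥ 1. -/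
theorem stmt3 (hd : 1 ≤ d) (p : Fin (d+1) → E d)
    (hp : ∀ i j, i ≠ j → dist (p i) (p j) = 1)
    (K : Set (E d)) (hKc : IsCompact K) (hKne : K.Nonempty)
    (hKself : K = ⋃ i, F p i '' K) :
    ∀ x y : List (Fin (d+1)), x ≠ y → x.length = y.length →
      ((Kcell p K x ∩ Kcell p K y).Nonempty ↔
        ∃ (u : List (Fin (d+1))) (i j : Fin (d+1)) (m : ℕ), i ≠ j ∧ 1 ≤ m ∧
          x = u ++ i :: List.replicate (m-1) j ∧
          y = u ++ j :: List.replicate (m-1) i) := by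
  intro x y hne hl
  constructor
  · exact forward p hp K hKc hKne hKself x y hl hne
  · rintro ⟨u, i, j, m, hij, hm, rfl, rfl⟩
    exact backward p hp K hKc hKne hKself u i j m hij hm
end
end

section
/- Let λ be a Borel probability measure on the unit interval [0,1] satisfying (a) λ(B) = λ(1 - B) for every Borel set B, and (b) λ(2B) = λ(B ∪ (1-B)) for every Borel set B ⊂ [0, 1/2]. Then λ is the Lebesgue measure on [0,1]. -/
open MeasureTheory Set

/-!
Write `F x = μ[0, x]` and `c = μ[0, 1]`. Identity (b) gives `F (2x) = 2 F x` on `[0, 1/2]` and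
identity (a) gives `F x + F (1 - x) = c`, up to atoms. Hence the defect `g x = F x - c x` satisfies
`g (T x) = 2 g x` for the doubling map `T x = 2x mod 1`, so the bounded function `g` vanishes.
The same doubling argument, applied to `x ↦ μ{x}`, first shows that `μ` has no atoms.
-/

lemma eq_zero_of_forall_exists_eq_two_mul {α : Type*} {s : Set α} {g : α → ℝ} {C : ℝ}
    (hbdd : ∀ x ∈ s, |g x| ≤ C) (hdouble : ∀ x ∈ s, ∃ y ∈ s, g y = 2 * g x) :
    ∀ x ∈ s, g x = 0 := by
  have hpow : ∀ n : ℕ, ∀ x ∈ s, ∃ y ∈ s, g y = 2 ^ n * g x := by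
    intro n
    induction n with
    | zero => exact fun x hx => ⟨x, hx, by simp⟩
    | succ n ih =>
      intro x hx
      obtain ⟨y, hy, hgy⟩ := ih x hx
      obtain ⟨z, hz, hgz⟩ := hdouble y hy
      exact ⟨z, hz, by rw [hgz, hgy, pow_succ]; ring⟩
  intro x hx
  by_contra hne
  have hpos : 0 < |g x| := abs_pos.mpr hne
  obtain ⟨n, hn⟩ := pow_unbounded_of_one_lt (C / |g x|) one_lt_two
  obtain ⟨y, hy, hgy⟩ := hpow n x hx
  have hle : (2 : ℝ) ^ n * |g x| ≤ C := by
    simpa [hgy, abs_mul] using hbdd y hy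
  rw [div_lt_iff₀ hpos] at hn
  linarith

def IsReflectionInvariant (μ : Measure ℝ) : Prop :=
  ∀ B : Set ℝ, MeasurableSet B → μ ((fun x => 1 - x) '' B) = μ B

def IsSelfSimilar (μ : Measure ℝ) : Prop :=
  ∀ B : Set ℝ, MeasurableSet B → B ⊆ Icc 0 (1 / 2) →
    μ ((fun x => 2 * x) '' B) = μ (B ∪ (fun x => 1 - x) '' B)

lemma IsReflectionInvariant.measureReal_image {μ : Measure ℝ} (ha : IsReflectionInvariant μ)
    {B : Set ℝ} (hB : MeasurableSet B) : μ.real ((fun x => 1 - x) '' B) = μ.real B := by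
  rw [measureReal_def, ha B hB, measureReal_def]

lemma IsSelfSimilar.measureReal_image {μ : Measure ℝ} (hb : IsSelfSimilar μ) {B : Set ℝ}
    (hB : MeasurableSet B) (hB' : B ⊆ Icc 0 (1 / 2)) :
    μ.real ((fun x => 2 * x) '' B) = μ.real (B ∪ (fun x => 1 - x) '' B) := by
  rw [measureReal_def, hb B hB hB', measureReal_def]

section

variable {μ : Measure ℝ} [IsFiniteMeasure μ]

lemma IsSelfSimilar.measureReal_singleton_one (hb : IsSelfSimilar μ) : μ.real {1} = 0 := by
  have h := hb.measureReal_image (measurableSet_singleton 0) (by norm_num)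
  rw [image_singleton, image_singleton, mul_zero, sub_zero,
    measureReal_union (by norm_num) (measurableSet_singleton 1)] at h
  linarith

lemma IsSelfSimilar.measureReal_singleton_half (hb : IsSelfSimilar μ) : μ.real {1 / 2} = 0 := by
  have h := hb.measureReal_image (measurableSet_singleton (1 / 2)) (by norm_num)
  rw [image_singleton, image_singleton, union_singleton] at h
  norm_num at h
  rw [← h, hb.measureReal_singleton_one]

lemma measureReal_singleton_two_mul (ha : IsReflectionInvariant μ) (hb : IsSelfSimilar μ)
    {x : ℝ} (hx₀ : 0 ≤ x) (hx : x < 1 / 2) : μ.real {2 * x} = 2 * μ.real {x} := by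
  have h := hb.measureReal_image (measurableSet_singleton x)
    (singleton_subset_iff.mpr ⟨hx₀, hx.le⟩)
  have hsymm := ha.measureReal_image (measurableSet_singleton x)
  simp only [image_singleton] at h hsymm
  rw [h, measureReal_union (by simp; linarith) (measurableSet_singleton _), hsymm, two_mul]

lemma measureReal_singleton_eq_zero (ha : IsReflectionInvariant μ) (hb : IsSelfSimilar μ)
    {x : ℝ} (hx : x ∈ Icc 0 1) : μ.real {x} = 0 := by
  refine eq_zero_of_forall_exists_eq_two_mul (g := fun y => μ.real {y}) (C := μ.real univ)
    (fun y _ => by rw [abs_of_nonneg measureReal_nonneg]; exact measureReal_mono (subset_univ _))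
    (fun y hy => ?_) x hx
  rcases lt_trichotomy y (1 / 2) with hlt | rfl | hgt
  · exact ⟨2 * y, ⟨by linarith [hy.1], by linarith⟩,
      measureReal_singleton_two_mul ha hb hy.1 hlt⟩
  · exact ⟨1 / 2, by norm_num, by simp only [hb.measureReal_singleton_half, mul_zero]⟩
  · have hsymm := ha.measureReal_image (measurableSet_singleton y)
    rw [image_singleton] at hsymm
    refine ⟨2 * (1 - y), ⟨by linarith [hy.2], by linarith [hy.1]⟩, ?_⟩
    rw [measureReal_singleton_two_mul ha hb (x := 1 - y) (by linarith [hy.2]) (by linarith), hsymm]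

lemma measureReal_Icc_zero_two_mul (ha : IsReflectionInvariant μ) (hb : IsSelfSimilar μ)
    {x : ℝ} (hx : x ≤ 1 / 2) :
    μ.real (Icc 0 (2 * x)) = 2 * μ.real (Icc 0 x) := by
  have h := hb.measureReal_image measurableSet_Icc (Icc_subset_Icc le_rfl hx)
  have hsymm := ha.measureReal_image (measurableSet_Icc (a := 0) (b := x))
  rw [image_mul_left_Icc' two_pos, mul_zero, image_const_sub_Icc, sub_zero] at h
  rw [image_const_sub_Icc, sub_zero] at hsymm
  have hinter : μ.real (Icc 0 x ∩ Icc (1 - x) 1) = 0 := by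
    refine measureReal_mono_null (fun y hy => ?_) hb.measureReal_singleton_half
    rw [mem_singleton_iff]
    linarith [hy.1.2, hy.2.1]
  have hunion := measureReal_union_add_inter (μ := μ) (s := Icc 0 x) measurableSet_Icc
    (t := Icc (1 - x) 1)
  rw [h]
  linarith

lemma measureReal_Icc_zero_add_one_sub (ha : IsReflectionInvariant μ) (hb : IsSelfSimilar μ)
    {x : ℝ} (hx : x ∈ Icc 0 1) :
    μ.real (Icc 0 x) + μ.real (Icc 0 (1 - x)) = μ.real (Icc 0 1) := by
  have hsymm := ha.measureReal_image (measurableSet_Icc (a := x) (b := 1))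
  rw [image_const_sub_Icc, sub_self] at hsymm
  have hunion := measureReal_union_add_inter (μ := μ) (s := Icc 0 x) measurableSet_Icc
    (t := Icc x 1)
  rw [Icc_union_Icc_eq_Icc hx.1 hx.2, Icc_inter_Icc, max_eq_right hx.1, min_eq_left hx.2,
    Icc_self, measureReal_singleton_eq_zero ha hb hx] at hunion
  linarith

lemma measureReal_Icc_zero_eq_mul (ha : IsReflectionInvariant μ) (hb : IsSelfSimilar μ)
    {x : ℝ} (hx : x ∈ Icc 0 1) : μ.real (Icc 0 x) = x * μ.real (Icc 0 1) := by
  set c := μ.real (Icc 0 1)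
  have hF : ∀ y ∈ Icc (0 : ℝ) 1, 0 ≤ μ.real (Icc 0 y) ∧ μ.real (Icc 0 y) ≤ c :=
    fun y hy => ⟨measureReal_nonneg, measureReal_mono (Icc_subset_Icc le_rfl hy.2)⟩
  suffices μ.real (Icc 0 x) - x * c = 0 by linarith
  refine eq_zero_of_forall_exists_eq_two_mul (g := fun y => μ.real (Icc 0 y) - y * c) (C := c)
    (fun y hy => abs_le.mpr ⟨by nlinarith [hF y hy, hy.2], by nlinarith [hF y hy, hy.1]⟩)
    (fun y hy => ?_) x hx
  rcases le_total y (1 / 2) with hle | hge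
  · refine ⟨2 * y, ⟨by linarith [hy.1], by linarith⟩, ?_⟩
    simp only [measureReal_Icc_zero_two_mul ha hb hle]
    ring
  · -- `2y - 1 = 1 - 2(1 - y)`: reflect, double, reflect back.
    refine ⟨2 * y - 1, ⟨by linarith, by linarith [hy.2]⟩, ?_⟩
    have h₁ := measureReal_Icc_zero_add_one_sub ha hb (x := 2 * y - 1)
      ⟨by linarith, by linarith [hy.2]⟩
    have h₂ := measureReal_Icc_zero_two_mul ha hb (x := 1 - y) (by linarith)
    have h₃ := measureReal_Icc_zero_add_one_sub ha hb hy
    rw [show 1 - (2 * y - 1) = 2 * (1 - y) by ring] at h₁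
    linarith

end

/-- A Borel probability measure on [0,1] satisfying the group invariance
identity λ(B) = λ(1-B) and the self-similar identity λ(2B) = λ(B ∪ (1-B)) for
B ⊆ [0,1/2] is the Lebesgue measure on [0,1]. -/
theorem stmt8 (μ : Measure ℝ) [IsProbabilityMeasure μ] (hsupp : μ (Set.Icc 0 1) = 1)
    (ha : ∀ B : Set ℝ, MeasurableSet B → μ ((fun x => 1 - x) '' B) = μ B)
    (hb : ∀ B : Set ℝ, MeasurableSet B → B ⊆ Set.Icc 0 (1/2) →
      μ ((fun x => 2 * x) '' B) = μ (B ∪ (fun x => 1 - x) '' B)) :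
    μ = volume.restrict (Set.Icc 0 1) := by
  have hIcc : ∀ b ≤ 1, μ (Icc 0 b) = volume (Icc 0 b) := by
    intro b hb₁
    rcases lt_or_ge b 0 with hb₀ | hb₀
    · simp [Icc_eq_empty_of_lt hb₀]
    · rw [← ofReal_measureReal, measureReal_Icc_zero_eq_mul ha hb ⟨hb₀, hb₁⟩, measureReal_def,
        hsupp, ENNReal.toReal_one, mul_one, Real.volume_Icc, sub_zero]
  have hμ : μ.restrict (Icc 0 1) = μ :=
    Measure.restrict_eq_self_of_ae_mem ((mem_ae_iff_prob_eq_one measurableSet_Icc).mpr hsupp)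
  rw [← hμ]
  refine Measure.ext_of_Iic _ _ fun a => ?_
  have hinter : Iic a ∩ Icc 0 1 = Icc 0 (min a 1) := by
    ext y
    simp only [mem_inter_iff, mem_Iic, mem_Icc, le_min_iff]
    tauto
  rw [Measure.restrict_apply measurableSet_Iic, Measure.restrict_apply measurableSet_Iic, hinter,
    hIcc _ (min_le_right a 1)]
end

section
/- Let λ be a Borel probability measure on [0,1] satisfying λ(B) = λ(1-B) and λ(2B) = λ(B ∪ (1-B)) for Borel B ⊂ [0,1/2]. Then λ assigns measure zero to every dyadic rational point: λ({k/2^n}) = 0 for all n ≥ 0 and 0 ≤ k ≤ 2^n. -/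
open MeasureTheory Set

/-! The self-similarity identity applied to a single point `x ≤ 1/2` gives
`μ {x} ≤ μ ({x} ∪ {1 - x}) = μ {2x}`, so a null dyadic point of level `n` forces its
halves in `[0, 1/2]` to be null, and the reflection `x ↦ 1 - x` covers `[1/2, 1]`.
The induction starts from `μ {0} = 0`: at `x = 0` the identity reads
`μ {0} = μ {0} + μ {1}`, so the finite mass `μ {1} = μ {0}` vanishes. -/

section DyadicAtoms

variable {μ : Measure ℝ}

lemma measure_singleton_one_sub
    (ha : ∀ B : Set ℝ, MeasurableSet B → μ ((fun x => 1 - x) '' B) = μ B) (x : ℝ) :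
    μ {1 - x} = μ {x} := by
  simpa using ha {x} (measurableSet_singleton x)

lemma measure_singleton_le_measure_singleton_two_mul
    (hb : ∀ B : Set ℝ, MeasurableSet B → B ⊆ Icc 0 (1/2) →
      μ ((fun x => 2 * x) '' B) = μ (B ∪ (fun x => 1 - x) '' B))
    {x : ℝ} (hx : x ∈ Icc 0 (1/2)) :
    μ {x} ≤ μ {2 * x} := by
  have h := hb {x} (measurableSet_singleton x) (singleton_subset_iff.mpr hx)
  rw [image_singleton, image_singleton] at h
  exact h ▸ measure_mono subset_union_left

lemma measure_singleton_zero_eq_zero [IsFiniteMeasure μ]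
    (ha : ∀ B : Set ℝ, MeasurableSet B → μ ((fun x => 1 - x) '' B) = μ B)
    (hb : ∀ B : Set ℝ, MeasurableSet B → B ⊆ Icc 0 (1/2) →
      μ ((fun x => 2 * x) '' B) = μ (B ∪ (fun x => 1 - x) '' B)) :
    μ {(0 : ℝ)} = 0 := by
  have h := hb {0} (measurableSet_singleton 0) (by norm_num)
  simp only [image_singleton, mul_zero, sub_zero] at h
  rw [measure_union (by norm_num) (measurableSet_singleton 1)] at h
  have h1 : μ {(1 : ℝ)} = 0 :=
    (ENNReal.add_right_inj (measure_ne_top μ _)).mp (h.symm.trans (add_zero _).symm)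
  rw [← h1]
  simpa using measure_singleton_one_sub ha 1

lemma measure_singleton_dyadic_eq_zero
    (hrefl : ∀ x : ℝ, μ {1 - x} = μ {x})
    (hhalf : ∀ x ∈ Icc (0 : ℝ) (1/2), μ {x} ≤ μ {2 * x})
    (h0 : μ {(0 : ℝ)} = 0) :
    ∀ n k : ℕ, k ≤ 2 ^ n → μ {(k : ℝ) / 2 ^ n} = 0 := by
  intro n
  induction n with
  | zero =>
    intro k hk
    interval_cases k
    · simpa using h0
    · simpa [h0] using hrefl 0
  | succ n ih =>
    have lower : ∀ k : ℕ, k ≤ 2 ^ n → μ {(k : ℝ) / 2 ^ (n + 1)} = 0 := by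
      intro k hk
      have hkR : (k : ℝ) ≤ 2 ^ n := by exact_mod_cast hk
      have hx : (k : ℝ) / 2 ^ (n + 1) ∈ Icc (0 : ℝ) (1/2) := by
        refine ⟨by positivity, ?_⟩
        rw [div_le_iff₀ (by positivity), pow_succ]
        linarith
      have hdouble : 2 * ((k : ℝ) / 2 ^ (n + 1)) = k / 2 ^ n := by
        rw [pow_succ]; field_simp
      exact nonpos_iff_eq_zero.mp ((hhalf _ hx).trans (hdouble ▸ ih k hk).le)
    intro k hk
    rcases le_or_gt k (2 ^ n) with hkn | hkn
    · exact lower k hkn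
    · have hreflect :
          (k : ℝ) / 2 ^ (n + 1) = 1 - ((2 ^ (n + 1) - k : ℕ) : ℝ) / 2 ^ (n + 1) := by
        rw [Nat.cast_sub hk]; push_cast; field_simp; ring
      rw [hreflect, hrefl, lower _ (by rw [pow_succ]; omega)]

end DyadicAtoms

theorem stmt9_general (μ : Measure ℝ) [IsProbabilityMeasure μ]
    (ha : ∀ B : Set ℝ, MeasurableSet B → μ ((fun x => 1 - x) '' B) = μ B)
    (hb : ∀ B : Set ℝ, MeasurableSet B → B ⊆ Set.Icc 0 (1/2) →
      μ ((fun x => 2 * x) '' B) = μ (B ∪ (fun x => 1 - x) '' B)) :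
    ∀ (n k : ℕ), k ≤ 2 ^ n → μ {((k : ℝ) / 2 ^ n)} = 0 :=
  measure_singleton_dyadic_eq_zero (measure_singleton_one_sub ha)
    (fun _ hx => measure_singleton_le_measure_singleton_two_mul hb hx)
    (measure_singleton_zero_eq_zero ha hb)

/-- A Borel probability measure on [0,1] satisfying the group invariance and
self-similar identities assigns measure zero to every dyadic rational point. -/
theorem stmt9 (μ : Measure ℝ) [IsProbabilityMeasure μ] (hsupp : μ (Set.Icc 0 1) = 1)
    (ha : ∀ B : Set ℝ, MeasurableSet B → μ ((fun x => 1 - x) '' B) = μ B)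
    (hb : ∀ B : Set ℝ, MeasurableSet B → B ⊆ Set.Icc 0 (1/2) →
      μ ((fun x => 2 * x) '' B) = μ (B ∪ (fun x => 1 - x) '' B)) :
    ∀ (n k : ℕ), k ≤ 2 ^ n → μ {((k : ℝ) / 2 ^ n)} = 0 :=
  stmt9_general μ ha hb
end

section
/- Let λ be a Borel probability measure on [0,1] satisfying λ(B) = λ(1-B) for all Borel B, and λ(2B) = λ(B ∪ (1-B)) for all Borel B ⊂ [0,1/2]. Then for every dyadic interval I = [k/2^n, (k+1)/2^n], λ(I) = 1/2^n. -/
open MeasureTheory Set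

/-! Induction on the level `n`. A dyadic interval `I` of level `n + 1` in `[0, 1/2]` meets its
reflection `1 - I` at most in `1/2`, which is a null point (the self-similarity identity for
`B = {1/2}` and `B = {0}` gives `μ {1/2} = μ {1} = 0`). Hence self-similarity and reflection
invariance give `μ (2 I) = μ (I ∪ (1 - I)) = 2 μ I`, and `2 I` is an interval of level `n`.
Intervals of level `n + 1` in `[1/2, 1]` are reflections of those in `[0, 1/2]`. -/

def dyadicIcc (n k : ℕ) : Set ℝ := Icc (k / 2 ^ n) ((k + 1) / 2 ^ n)

lemma measurableSet_dyadicIcc (n k : ℕ) : MeasurableSet (dyadicIcc n k) := measurableSet_Icc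

lemma two_mul_image_dyadicIcc_succ (n k : ℕ) :
    (fun x : ℝ => 2 * x) '' dyadicIcc (n + 1) k = dyadicIcc n k := by
  rw [dyadicIcc, image_mul_left_Icc' two_pos, dyadicIcc, pow_succ]
  congr 1 <;> field_simp

lemma one_sub_image_dyadicIcc {n k : ℕ} (hk : k < 2 ^ n) :
    (fun x : ℝ => 1 - x) '' dyadicIcc n k = dyadicIcc n (2 ^ n - 1 - k) := by
  have hcast : ((2 ^ n - 1 - k : ℕ) : ℝ) = 2 ^ n - 1 - k := by
    rw [Nat.cast_sub (by omega), Nat.cast_sub Nat.one_le_two_pow]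
    push_cast
    ring
  rw [dyadicIcc, image_const_sub_Icc, dyadicIcc, hcast]
  congr 1 <;> field_simp <;> ring

lemma dyadicIcc_succ_subset_Icc_zero_half {n k : ℕ} (hk : k < 2 ^ n) :
    dyadicIcc (n + 1) k ⊆ Icc 0 (1 / 2) := by
  have hk' : (k : ℝ) + 1 ≤ 2 ^ n := by exact_mod_cast hk
  refine Icc_subset_Icc (by positivity) ?_
  rw [div_le_div_iff₀ (by positivity) two_pos, pow_succ]
  linarith

lemma inter_one_sub_image_subset_half {B : Set ℝ} (hB : B ⊆ Iic (1 / 2)) :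
    B ∩ (fun x => 1 - x) '' B ⊆ {1 / 2} := by
  rintro x ⟨hx, y, hy, rfl⟩
  have hx' := hB hx
  have hy' := hB hy
  simp only [mem_Iic, mem_singleton_iff] at hx' hy' ⊢
  linarith

lemma ENNReal.eq_one_div_two_pow_succ {x : ENNReal} {n : ℕ} (h : 2 * x = 1 / 2 ^ n) :
    x = 1 / 2 ^ (n + 1) := by
  rw [ENNReal.eq_div_iff (by positivity) (by simp), pow_succ, mul_assoc, h,
    ENNReal.mul_div_cancel (by positivity) (by simp)]

section SelfSimilar

variable {μ : Measure ℝ}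
  (hb : ∀ B : Set ℝ, MeasurableSet B → B ⊆ Icc 0 (1 / 2) →
    μ ((fun x => 2 * x) '' B) = μ (B ∪ (fun x => 1 - x) '' B))
include hb

lemma measure_singleton_one_eq_zero [IsFiniteMeasure μ] : μ {1} = 0 := by
  have h := hb {0} (measurableSet_singleton 0) (by norm_num)
  rw [image_singleton, image_singleton, mul_zero, sub_zero,
    measure_union (by norm_num) (measurableSet_singleton 1)] at h
  simpa using h.symm

lemma measure_singleton_half_eq_zero [IsFiniteMeasure μ] : μ {1 / 2} = 0 := by
  have h := hb {1 / 2} (measurableSet_singleton _) (by norm_num)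
  norm_num at h
  rw [← h, measure_singleton_one_eq_zero hb]

lemma measure_two_mul_image_eq_two_mul [IsFiniteMeasure μ]
    (ha : ∀ B : Set ℝ, MeasurableSet B → μ ((fun x => 1 - x) '' B) = μ B)
    {B : Set ℝ} (hB : MeasurableSet B) (hB_sub : B ⊆ Icc 0 (1 / 2)) :
    μ ((fun x => 2 * x) '' B) = 2 * μ B := by
  have h_inter : μ (B ∩ (fun x => 1 - x) '' B) = 0 :=
    measure_mono_null (inter_one_sub_image_subset_half (hB_sub.trans Icc_subset_Iic_self))
      (measure_singleton_half_eq_zero hb)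
  have h_union := measure_union_add_inter' (μ := μ) hB ((fun x => 1 - x) '' B)
  rw [h_inter, add_zero, ha B hB] at h_union
  rw [hb B hB hB_sub, h_union, two_mul]

end SelfSimilar

/-- A Borel probability measure on [0,1] satisfying the group invariance and
self-similar identities gives every dyadic interval [k/2^n, (k+1)/2^n] measure
1/2^n. -/
theorem stmt10 (μ : Measure ℝ) [IsProbabilityMeasure μ] (hsupp : μ (Set.Icc 0 1) = 1)
    (ha : ∀ B : Set ℝ, MeasurableSet B → μ ((fun x => 1 - x) '' B) = μ B)
    (hb : ∀ B : Set ℝ, MeasurableSet B → B ⊆ Set.Icc 0 (1/2) →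
      μ ((fun x => 2 * x) '' B) = μ (B ∪ (fun x => 1 - x) '' B)) :
    ∀ (n k : ℕ), k < 2 ^ n →
      μ (Set.Icc ((k : ℝ) / 2 ^ n) (((k : ℝ) + 1) / 2 ^ n)) = 1 / 2 ^ n := by
  show ∀ n k : ℕ, k < 2 ^ n → μ (dyadicIcc n k) = 1 / 2 ^ n
  intro n
  induction n with
  | zero =>
    intro k hk
    obtain rfl : k = 0 := by omega
    simpa [dyadicIcc] using hsupp
  | succ n ih =>
    have h_lower : ∀ k < 2 ^ n, μ (dyadicIcc (n + 1) k) = 1 / 2 ^ (n + 1) := fun k hk =>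
      ENNReal.eq_one_div_two_pow_succ <| by
        rw [← measure_two_mul_image_eq_two_mul hb ha (measurableSet_dyadicIcc _ _)
          (dyadicIcc_succ_subset_Icc_zero_half hk), two_mul_image_dyadicIcc_succ, ih k hk]
    intro k hk
    rcases lt_or_ge k (2 ^ n) with hk_lower | hk_upper
    · exact h_lower k hk_lower
    · have h_pow := pow_succ 2 n
      obtain ⟨k', hk', rfl⟩ : ∃ k' < 2 ^ n, k = 2 ^ (n + 1) - 1 - k' :=
        ⟨2 ^ (n + 1) - 1 - k, by omega, by omega⟩
      rw [← one_sub_image_dyadicIcc (by omega), ha _ (measurableSet_dyadicIcc _ _),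
        h_lower k' hk']
end

section
/- Let B ⊂ K_0 be invariant under the subgroup A'_d of symmetries of the Sierpinski gasket K that fix the cell K_0. Then the set ⋃_{i=0}^d R_{0i}B is invariant under the full symmetry group of K, and moreover (⋃_{i=0}^d R_{0i}B) ∩ K_0 = B. -/
/-! Every symmetry `g` of `K` is affine (Mazur–Ulam), so it permutes the extreme points of `K`.
These are exactly the vertices: each point of `K` is a midpoint `(p i + y) / 2` with `y ∈ K`, and
a vertex is extreme because `K` lies in the closed unit ball around any other vertex, which is
strictly convex. Hence `g p₀ = p_j = R_j p₀`, so `R_j⁻¹ g` fixes `p₀` and therefore `K₀`, which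
gives `g B = R_j B`.

For the intersection, if `(p_i + a) / 2 = (p_j + b) / 2` with `a, b ∈ K`, the parallelogram law
and `diam K ≤ 1` force `b = p_i`, so `K₀ ∩ K_i ⊆ {p_{0i}}`. As `R_{0i}` fixes `p_{0i}` and maps
`K₀` onto `K_i`, a point `R_{0i} b ∈ K₀` with `b ∈ B` must equal `b`. -/

open MeasureTheory Set Filter
noncomputable section

variable {d : ℕ}

section Convexity

variable {V W : Type*} [NormedAddCommGroup V] [NormedSpace ℝ V]
  [NormedAddCommGroup W] [NormedSpace ℝ W]

theorem IsometryEquiv.image_extremePoints (g : V ≃ᵢ W) (s : Set V) :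
    g '' extremePoints ℝ s = extremePoints ℝ (g '' s) := by
  ext b
  obtain ⟨a, rfl⟩ := g.surjective b
  have : ∀ x y, g '' openSegment ℝ x y = openSegment ℝ (g x) (g y) :=
    image_openSegment ℝ g.toRealAffineIsometryEquiv.toAffineEquiv.toAffineMap
  simp only [mem_extremePoints, g.surjective.forall, g.injective.mem_set_image,
    g.injective.eq_iff, ← this]

theorem mem_extremePoints_of_subset_closedBall [StrictConvexSpace ℝ V] {s : Set V}
    {x c : V} {r : ℝ} (hr : r ≠ 0) (hx : x ∈ s) (hs : s ⊆ Metric.closedBall c r)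
    (hxc : dist x c = r) : x ∈ extremePoints ℝ s :=
  inter_extremePoints_subset_extremePoints_of_subset hs
    ⟨hx, StrictConvexSpace.sphere_subset_extremePoints_closedBall c hr hxc⟩

end Convexity

theorem eq_of_midpoint_eq_midpoint {V : Type*} [NormedAddCommGroup V] [InnerProductSpace ℝ V]
    {x y a b : V} (h : midpoint ℝ x a = midpoint ℝ y b) (ha : dist a x ≤ dist x y)
    (hb : dist b y ≤ dist x y) : b = x := by
  rw [midpoint_eq_midpoint_iff_vsub_eq_vsub, vsub_eq_sub, vsub_eq_sub] at h
  have hpar := parallelogram_law_with_norm ℝ (b - x) (y - x)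
  rw [show b - x + (y - x) = a - x by rw [show a = b - (x - y) by rw [h]; abel]; abel,
    show b - x - (y - x) = b - y by abel, ← dist_eq_norm, ← dist_eq_norm, ← dist_eq_norm,
    ← dist_eq_norm, dist_comm y x] at hpar
  have : dist b x ^ 2 ≤ 0 := by
    nlinarith [dist_nonneg (x := a) (y := x), dist_nonneg (x := b) (y := y)]
  exact dist_le_zero.mp (by nlinarith [dist_nonneg (x := b) (y := x)])

theorem IsometryEquiv.image_eq_of_forall_image_subset {α : Type*} [PseudoEMetricSpace α]
    {G : Subgroup (α ≃ᵢ α)} {U : Set α} (h : ∀ g ∈ G, g '' U ⊆ U) {g : α ≃ᵢ α} (hg : g ∈ G) :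
    g '' U = U :=
  (h g hg).antisymm fun x hx => ⟨g⁻¹ x, h g⁻¹ (inv_mem hg) ⟨x, hx, rfl⟩, g.apply_inv_self x⟩

theorem dist_F_vertex (p : Fin (d+1) → E d) (i : Fin (d+1)) (x : E d) :
    dist (F p i x) (p i) = dist x (p i) / 2 := by
  rw [F, dist_midpoint_left, dist_comm, Real.norm_two, inv_mul_eq_div]

section Gasket

variable {p : Fin (d+1) → E d} {K : Set (E d)}

theorem F_mem (hKself : K = ⋃ i, F p i '' K) (i : Fin (d+1)) {x : E d} (hx : x ∈ K) :
    F p i x ∈ K := by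
  rw [hKself]
  exact mem_iUnion_of_mem i (mem_image_of_mem _ hx)

theorem exists_F_eq (hKself : K = ⋃ i, F p i '' K) {x : E d} (hx : x ∈ K) :
    ∃ i, ∃ y ∈ K, F p i y = x := by
  rw [hKself] at hx
  simpa only [mem_iUnion, mem_image] using hx

theorem dist_le_one (hp : ∀ i j, i ≠ j → dist (p i) (p j) = 1) (hKc : IsCompact K)
    (hKne : K.Nonempty) (hKself : K = ⋃ i, F p i '' K) {x y : E d} (hx : x ∈ K)
    (hy : y ∈ K) : dist x y ≤ 1 := by
  obtain ⟨⟨x₀, y₀⟩, ⟨hx₀, hy₀⟩, hmax⟩ :=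
    (hKc.prod hKc).exists_isMaxOn (hKne.prod hKne) continuous_dist.continuousOn
  obtain ⟨i, a, ha, rfl⟩ := exists_F_eq hKself hx₀
  obtain ⟨j, b, hb, rfl⟩ := exists_F_eq hKself hy₀
  have hpij : dist (p i) (p j) ≤ 1 := by
    rcases eq_or_ne i j with rfl | hij
    · simp
    · exact (hp i j hij).le
  have hab : dist a b ≤ dist (F p i a) (F p j b) :=
    isMaxOn_iff.mp hmax (a, b) (mk_mem_prod ha hb)
  have hmid : dist (F p i a) (F p j b) ≤ (dist (p i) (p j) + dist a b) / 2 :=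
    dist_midpoint_midpoint_le (p i) a (p j) b
  exact (isMaxOn_iff.mp hmax (x, y) (mk_mem_prod hx hy)).trans (by linarith)

theorem extremePoints_subset_range (hKc : IsCompact K) (hKne : K.Nonempty)
    (hKself : K = ⋃ i, F p i '' K) : extremePoints ℝ K ⊆ range p := by
  intro x hx
  obtain ⟨i, y, hy, rfl⟩ := exists_F_eq hKself hx.1
  exact ⟨i, ((mem_extremePoints.mp hx).2 _ (vertex_mem hKc hKne hKself i) _ hy
    (midpoint_mem_openSegment _ _)).1⟩

theorem vertex_mem_extremePoints (hd : 1 ≤ d) (hp : ∀ i j, i ≠ j → dist (p i) (p j) = 1)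
    (hKc : IsCompact K) (hKne : K.Nonempty) (hKself : K = ⋃ i, F p i '' K)
    (i : Fin (d+1)) : p i ∈ extremePoints ℝ K := by
  have : Nontrivial (Fin (d+1)) := Fin.nontrivial_iff_two_le.mpr (by omega)
  obtain ⟨j, hij⟩ := exists_ne i
  exact mem_extremePoints_of_subset_closedBall one_ne_zero (vertex_mem hKc hKne hKself i)
    (fun y hy => dist_le_one hp hKc hKne hKself hy (vertex_mem hKc hKne hKself j))
    (hp i j hij.symm)

theorem exists_apply_vertex_eq (hd : 1 ≤ d) (hp : ∀ i j, i ≠ j → dist (p i) (p j) = 1)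
    (hKc : IsCompact K) (hKne : K.Nonempty) (hKself : K = ⋃ i, F p i '' K)
    {g : E d ≃ᵢ E d} (hg : g ∈ symGroup K) (i : Fin (d+1)) : ∃ j, p j = g (p i) := by
  refine extremePoints_subset_range hKc hKne hKself ?_
  rw [← hg, ← g.image_extremePoints]
  exact mem_image_of_mem g (vertex_mem_extremePoints hd hp hKc hKne hKself i)

theorem image_F_image_of_apply_vertex {g : E d ≃ᵢ E d} {i j : Fin (d+1)} (hij : g (p i) = p j)
    (S : Set (E d)) : g '' (F p i '' S) = F p j '' (g '' S) := by
  simp only [image_image, F, g.map_midpoint, hij]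

theorem F_image_inter_F_image_subset (hp : ∀ i j, i ≠ j → dist (p i) (p j) = 1)
    (hKc : IsCompact K) (hKne : K.Nonempty) (hKself : K = ⋃ i, F p i '' K)
    {i j : Fin (d+1)} (hij : i ≠ j) :
    F p i '' K ∩ F p j '' K ⊆ {midpoint ℝ (p i) (p j)} := by
  rintro z ⟨⟨a, ha, rfl⟩, ⟨b, hb, hba⟩⟩
  have hvertex : ∀ {x} k, x ∈ K → dist x (p k) ≤ dist (p i) (p j) := fun k hx =>
    hp i j hij ▸ dist_le_one hp hKc hKne hKself hx (vertex_mem hKc hKne hKself k)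
  have hb : b = p i := eq_of_midpoint_eq_midpoint hba.symm (hvertex i ha) (hvertex j hb)
  rw [mem_singleton_iff, ← hba, hb]
  exact midpoint_comm _ _

theorem exists_image_eq_image_of_cell_invariant (hd : 1 ≤ d)
    (hp : ∀ i j, i ≠ j → dist (p i) (p j) = 1) (hKc : IsCompact K) (hKne : K.Nonempty)
    (hKself : K = ⋃ i, F p i '' K) {R : Fin (d+1) → E d ≃ᵢ E d} (hRsym : ∀ i, R i ∈ symGroup K)
    (hRvertex : ∀ i, R i (p 0) = p i) {B : Set (E d)}
    (hBinv : ∀ g ∈ symGroup K, g '' (F p 0 '' K) = F p 0 '' K → g '' B = B)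
    {g : E d ≃ᵢ E d} (hg : g ∈ symGroup K) : ∃ j, g '' B = R j '' B := by
  obtain ⟨j, hj⟩ := exists_apply_vertex_eq hd hp hKc hKne hKself hg 0
  have hhK : (R j)⁻¹ * g ∈ symGroup K := mul_mem (inv_mem (hRsym j)) hg
  have hh0 : ((R j)⁻¹ * g) (p 0) = p 0 := by
    rw [IsometryEquiv.mul_apply, ← hj, ← hRvertex j, IsometryEquiv.inv_apply_self]
  have hhB := hBinv _ hhK (by rw [image_F_image_of_apply_vertex hh0, hhK])
  refine ⟨j, ?_⟩
  rw [← congrArg (R j '' ·) hhB, ← image_comp, ← IsometryEquiv.coe_mul, mul_inv_cancel_left]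

theorem image_iUnion_image_eq (hd : 1 ≤ d) (hp : ∀ i j, i ≠ j → dist (p i) (p j) = 1)
    (hKc : IsCompact K) (hKne : K.Nonempty) (hKself : K = ⋃ i, F p i '' K)
    {R : Fin (d+1) → E d ≃ᵢ E d} (hRsym : ∀ i, R i ∈ symGroup K)
    (hRvertex : ∀ i, R i (p 0) = p i) {B : Set (E d)}
    (hBinv : ∀ g ∈ symGroup K, g '' (F p 0 '' K) = F p 0 '' K → g '' B = B)
    {g : E d ≃ᵢ E d} (hg : g ∈ symGroup K) : g '' ⋃ i, R i '' B = ⋃ i, R i '' B := by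
  refine IsometryEquiv.image_eq_of_forall_image_subset (fun g hg => ?_) hg
  rw [image_iUnion]
  refine iUnion_subset fun i => ?_
  obtain ⟨j, hj⟩ := exists_image_eq_image_of_cell_invariant hd hp hKc hKne hKself hRsym
    hRvertex hBinv (mul_mem hg (hRsym i))
  rw [← image_comp, ← IsometryEquiv.coe_mul, hj]
  exact subset_iUnion (fun j => R j '' B) j

theorem iUnion_image_inter_F_image (hp : ∀ i j, i ≠ j → dist (p i) (p j) = 1)
    (hKc : IsCompact K) (hKne : K.Nonempty) (hKself : K = ⋃ i, F p i '' K)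
    {R : Fin (d+1) → E d ≃ᵢ E d} (hR0 : ∀ x, R 0 x = x) (hRsym : ∀ i, R i ∈ symGroup K)
    (hRswap : ∀ i, i ≠ 0 → R i (p 0) = p i ∧ R i (p i) = p 0) {B : Set (E d)}
    (hBsub : B ⊆ F p 0 '' K) : (⋃ i, R i '' B) ∩ F p 0 '' K = B := by
  refine subset_antisymm ?_ fun x hx => ⟨mem_iUnion_of_mem 0 ⟨x, hx, hR0 x⟩, hBsub hx⟩
  rintro _ ⟨hxU, hx0⟩
  obtain ⟨i, b, hb, rfl⟩ := mem_iUnion.mp hxU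
  rcases eq_or_ne i 0 with rfl | hi
  · rwa [hR0]
  have hcell : R i b ∈ F p i '' K := by
    rw [← hRsym i, ← image_F_image_of_apply_vertex (hRswap i hi).1]
    exact mem_image_of_mem _ (hBsub hb)
  have hm : R i b = midpoint ℝ (p 0) (p i) :=
    F_image_inter_F_image_subset hp hKc hKne hKself hi.symm ⟨hx0, hcell⟩
  have hRm : R i (midpoint ℝ (p 0) (p i)) = midpoint ℝ (p 0) (p i) := by
    rw [(R i).map_midpoint, (hRswap i hi).1, (hRswap i hi).2, midpoint_comm]
  have hbm : b = midpoint ℝ (p 0) (p i) := (R i).injective (hm.trans hRm.symm)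
  rwa [hm, ← hbm]

end Gasket

/-- If `B ⊆ K₀` is invariant under the subgroup of symmetries fixing the cell
`K₀`, then `⋃ᵢ R₀ᵢ B` is invariant under the full symmetry group, and
`(⋃ᵢ R₀ᵢ B) ∩ K₀ = B`. -/
theorem stmt13 (hd : 1 ≤ d) (p : Fin (d+1) → E d)
    (hp : ∀ i j, i ≠ j → dist (p i) (p j) = 1)
    (K : Set (E d)) (hKc : IsCompact K) (hKne : K.Nonempty)
    (hKself : K = ⋃ i, F p i '' K)
    (R : Fin (d+1) → (E d ≃ᵢ E d)) (hR0 : ∀ x, R 0 x = x)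
    (hRsym : ∀ i, (R i) '' K = K)
    (hRswap : ∀ i, i ≠ 0 → R i (p 0) = p i ∧ R i (p i) = p 0 ∧
      ∀ l, l ≠ 0 → l ≠ i → R i (p l) = p l)
    (B : Set (E d)) (hBsub : B ⊆ F p 0 '' K)
    (hBinv : ∀ g : E d ≃ᵢ E d, g '' K = K → g '' (F p 0 '' K) = F p 0 '' K →
      g '' B = B) :
    (∀ g : E d ≃ᵢ E d, g '' K = K →
      g '' (⋃ i, R i '' B) = ⋃ i, R i '' B) ∧
    (⋃ i, R i '' B) ∩ (F p 0 '' K) = B := by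
  have hRvertex : ∀ i, R i (p 0) = p i := fun i => by
    rcases eq_or_ne i 0 with rfl | hi
    · exact hR0 _
    · exact (hRswap i hi).1
  exact ⟨fun g hg => image_iUnion_image_eq hd hp hKc hKne hKself hRsym hRvertex hBinv hg,
    iUnion_image_inter_F_image hp hKc hKne hKself hR0 hRsym
      (fun i hi => ⟨(hRswap i hi).1, (hRswap i hi).2.1⟩) hBsub⟩
end
end

section
/- Any two distinct cells K_i = F_i(K) and K_j = F_j(K) (i ≠ j) of the d-dimensional Sierpinski gasket intersect in exactly one point, the midpoint p_{ij} = (p_i + p_j)/2. -/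
open MeasureTheory Set Filter
noncomputable section

variable {d : ℕ}

/-!
The vertices `p i` are the fixed points of the contractions `F p i`, so they lie in `K`.
Taking a point of `K` farthest from `p k`, and writing it as `(p i + y)/2` with `y ∈ K`, shows
that `K` lies within distance `max_i dist (p i) (p k) = 1` of every vertex. Hence if `(p i + a)/2 = (p j + b)/2`
with `a, b ∈ K`, this point is within `1/2` of both `p i` and `p j`, which are at distance `1`;
by strict convexity of the Euclidean norm it is their midpoint.
-/

theorem ContractingWith.mem_of_isFixedPt {α : Type*} [MetricSpace α] [CompleteSpace α]
    {k : NNReal} {f : α → α} {K : Set α} {x : α} (hf : ContractingWith k f) (hK : IsClosed K)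
    (hne : K.Nonempty) (hmaps : MapsTo f K K) (hx : Function.IsFixedPt f x) : x ∈ K := by
  obtain ⟨y, hy⟩ := hne
  have : Nonempty α := ⟨y⟩
  rw [hf.fixedPoint_unique hx]
  exact hK.mem_of_tendsto (hf.tendsto_iterate_fixedPoint y)
    (Eventually.of_forall fun n => hmaps.iterate n hy)

section Midpoint

variable {V : Type*} [NormedAddCommGroup V] [NormedSpace ℝ V]

theorem contractingWith_midpoint (v : V) : ContractingWith 2⁻¹ (midpoint ℝ v) := by
  refine ⟨by norm_num, LipschitzWith.of_dist_le_mul fun x y => ?_⟩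
  calc dist (midpoint ℝ v x) (midpoint ℝ v y) ≤ (dist v v + dist x y) / 2 :=
        dist_midpoint_midpoint_le _ _ _ _
    _ = ↑(2⁻¹ : NNReal) * dist x y := by simp [div_eq_inv_mul]

theorem subset_closedBall_of_subset_iUnion_image_midpoint {ι : Type*} {p : ι → V} {K : Set V}
    {c : V} {r : ℝ} (hK : IsCompact K) (hself : K ⊆ ⋃ i, midpoint ℝ (p i) '' K)
    (hp : ∀ i, dist (p i) c ≤ r) : K ⊆ Metric.closedBall c r := by
  intro a ha
  obtain ⟨x, hxK, hmax⟩ := hK.exists_isMaxOn (f := (dist · c)) ⟨a, ha⟩ (by fun_prop)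
  rw [isMaxOn_iff] at hmax
  obtain ⟨i, y, hyK, rfl⟩ : ∃ i, ∃ y ∈ K, midpoint ℝ (p i) y = x := by
    simpa using hself hxK
  have hfar : dist (midpoint ℝ (p i) y) c ≤ (r + dist (midpoint ℝ (p i) y) c) / 2 :=
    calc dist (midpoint ℝ (p i) y) c = dist (midpoint ℝ (p i) y) (midpoint ℝ c c) := by
          rw [midpoint_self]
      _ ≤ (dist (p i) c + dist y c) / 2 := dist_midpoint_midpoint_le _ _ _ _
      _ ≤ (r + dist (midpoint ℝ (p i) y) c) / 2 := by gcongr; exacts [hp i, hmax y hyK]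
  exact (hmax a ha).trans (by linarith)

theorem midpoint_eq_midpoint_of_dist_le [StrictConvexSpace ℝ V] {x y a b : V}
    (ha : dist a x ≤ dist x y) (hb : dist b y ≤ dist x y)
    (h : midpoint ℝ x a = midpoint ℝ y b) : midpoint ℝ x a = midpoint ℝ x y := by
  have hxz : dist x (midpoint ℝ x a) = dist a x / 2 := by
    rw [dist_left_midpoint, dist_comm]; simp [div_eq_inv_mul]
  have hzy : dist (midpoint ℝ x a) y = dist b y / 2 := by
    rw [h, dist_midpoint_left, dist_comm]; simp [div_eq_inv_mul]
  have := dist_triangle x (midpoint ℝ x a) y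
  exact eq_midpoint_of_dist_eq_half (by linarith) (by linarith)

end Midpoint

theorem stmt14_general (p : Fin (d+1) → E d)
    (hp : ∀ i j, i ≠ j → dist (p i) (p j) = 1)
    (K : Set (E d)) (hKc : IsCompact K) (hKne : K.Nonempty)
    (hKself : K = ⋃ i, F p i '' K) :
    ∀ i j : Fin (d+1), i ≠ j →
      (F p i '' K) ∩ (F p j '' K) = {midpoint ℝ (p i) (p j)} := by
  have hmaps : ∀ i, MapsTo (midpoint ℝ (p i)) K K := fun i x hx => by
    rw [hKself]; exact mem_iUnion.2 ⟨i, mem_image_of_mem _ hx⟩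
  have hvertex : ∀ i, p i ∈ K := fun i =>
    (contractingWith_midpoint (p i)).mem_of_isFixedPt hKc.isClosed hKne (hmaps i)
      (midpoint_self ℝ (p i))
  have hball : ∀ k, ∀ a ∈ K, dist a (p k) ≤ 1 := fun k a ha => by
    refine subset_closedBall_of_subset_iUnion_image_midpoint hKc hKself.subset (fun l => ?_) ha
    rcases eq_or_ne l k with rfl | hlk
    · simp
    · exact (hp l k hlk).le
  intro i j hij
  refine Subset.antisymm ?_ ?_
  · rintro _ ⟨⟨a, ha, rfl⟩, b, hb, hab⟩
    have hpij := hp i j hij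
    exact midpoint_eq_midpoint_of_dist_le (hpij ▸ hball i a ha)
      (hpij ▸ hball j b hb) hab.symm
  · rintro _ rfl
    exact ⟨⟨p j, hvertex j, rfl⟩, p i, hvertex i, midpoint_comm _ _⟩

/-- Distinct level-1 cells of the Sierpinski gasket intersect in exactly one
point, the midpoint of the corresponding vertices. -/
theorem stmt14 (hd : 1 ≤ d) (p : Fin (d+1) → E d)
    (hp : ∀ i j, i ≠ j → dist (p i) (p j) = 1)
    (K : Set (E d)) (hKc : IsCompact K) (hKne : K.Nonempty)
    (hKself : K = ⋃ i, F p i '' K) :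
    ∀ i j : Fin (d+1), i ≠ j →
      (F p i '' K) ∩ (F p j '' K) = {midpoint ℝ (p i) (p j)} :=
  stmt14_general p hp K hKc hKne hKself
end
end
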